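/- Let A be a d×n integer matrix such that the only vector in ker(A) with all coordinates nonnegative is 0. Then the universal distance-reducing Markov basis 𝒟(A) (the union of all minimally distance reducing subsets of ker(A)) and the universal strongly distance-reducing Markov basis 𝒟^s(A) (the union of all minimally strongly distance reducing subsets of ker(A)) are finite sets. -/

import Mathlib

open Pointwise

namespace DistRed

variable {n d : ℕ}

/-- Componentwise positive part `u⁺`. -/
def posP (u : Fin n → ℤ) : Fin n → ℤ := fun i => max (u i) 0

/-- Componentwise negative part `u⁻`. -/
def negP (u : Fin n → ℤ) : Fin n → ℤ := fun i => max (-u i) 0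

/-- The 1-norm `‖u‖ = ∑ᵢ |uᵢ|`. -/
def onorm (u : Fin n → ℤ) : ℤ := ∑ i, |u i|

/-- Componentwise inequality of vectors. -/
def vle (u v : Fin n → ℤ) : Prop := ∀ i, u i ≤ v i

/-- The single move `u` reduces the 1-norm distance of `z = z⁺ - z⁻`. -/
def reducesOne (u z : Fin n → ℤ) : Prop :=
  (vle (posP u) (posP z) ∧ onorm (z - u) < onorm z) ∨
  (vle (negP u) (posP z) ∧ onorm (z + u) < onorm z) ∨
  (vle (posP u) (negP z) ∧ onorm (z + u) < onorm z) ∨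
  (vle (negP u) (negP z) ∧ onorm (z - u) < onorm z)

/-- `B` reduces the distance of `z`. -/
def reduces (B : Set (Fin n → ℤ)) (z : Fin n → ℤ) : Prop := ∃ u ∈ B, reducesOne u z

/-- `B` strongly reduces the distance of `z`. -/
def stronglyReduces (B : Set (Fin n → ℤ)) (z : Fin n → ℤ) : Prop :=
  (∃ u ∈ B, (vle (posP u) (posP z) ∧ onorm (z - u) < onorm z) ∨
            (vle (negP u) (posP z) ∧ onorm (z + u) < onorm z)) ∧
  (∃ u ∈ B, (vle (posP u) (negP z) ∧ onorm (z + u) < onorm z) ∨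
            (vle (negP u) (negP z) ∧ onorm (z - u) < onorm z))

/-- `B` is distance reducing relative to the kernel `K`. -/
def distanceReducing (K B : Set (Fin n → ℤ)) : Prop := ∀ z ∈ K, z ≠ 0 → reduces B z

/-- `B` is strongly distance reducing relative to the kernel `K`. -/
def stronglyDistanceReducing (K B : Set (Fin n → ℤ)) : Prop :=
  ∀ z ∈ K, z ≠ 0 → stronglyReduces B z

/-- The Graver basis: nonzero elements of `K` with no proper conformal decomposition. -/
def graver (K : Set (Fin n → ℤ)) : Set (Fin n → ℤ) :=
  {z | z ∈ K ∧ z ≠ 0 ∧ ¬ ∃ u v, u ∈ K ∧ v ∈ K ∧ u ≠ 0 ∧ v ≠ 0 ∧ z = u + v ∧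
      posP z = posP u + posP v ∧ negP z = negP u + negP v}

/-- `B` connects `x` and `y` through nonnegative points by moves in `B ∪ -B`. -/
def connects (B : Set (Fin n → ℤ)) (x y : Fin n → ℤ) : Prop :=
  ∃ (k : ℕ) (f : Fin (k + 1) → Fin n → ℤ),
    f 0 = x ∧ f (Fin.last k) = y ∧ (∀ i j, 0 ≤ f i j) ∧
    ∀ i : Fin k, f i.succ - f i.castSucc ∈ B ∪ -B

/-- Kernel of an integer matrix. -/
def kerM (A : Matrix (Fin d) (Fin n) ℤ) : Set (Fin n → ℤ) := {u | A.mulVec u = 0}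

/-- Markov basis of a matrix. -/
def isMarkovM (A : Matrix (Fin d) (Fin n) ℤ) (B : Set (Fin n → ℤ)) : Prop :=
  B ⊆ kerM A ∧ ∀ x y : Fin n → ℤ, (∀ j, 0 ≤ x j) → (∀ j, 0 ≤ y j) →
    A.mulVec x = A.mulVec y → connects B x y

def isMinimalMarkovM (A : Matrix (Fin d) (Fin n) ℤ) (B : Set (Fin n → ℤ)) : Prop :=
  isMarkovM A B ∧ ∀ B' ⊂ B, ¬ isMarkovM A B'

/-- Kernel of the 1×n matrix `a`. -/
def kerV (a : Fin n → ℕ) : Set (Fin n → ℤ) := {u | ∑ i, (a i : ℤ) * u i = 0}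

/-- Markov basis of a 1×n matrix. -/
def isMarkov (a : Fin n → ℕ) (B : Set (Fin n → ℤ)) : Prop :=
  B ⊆ kerV a ∧ ∀ x y : Fin n → ℤ, (∀ j, 0 ≤ x j) → (∀ j, 0 ≤ y j) →
    (∑ i, (a i : ℤ) * x i) = (∑ i, (a i : ℤ) * y i) → connects B x y

def isMinimalMarkov (a : Fin n → ℕ) (B : Set (Fin n → ℤ)) : Prop :=
  isMarkov a B ∧ ∀ B' ⊂ B, ¬ isMarkov a B'

/-- The circuit `z_{i,j}` of the 1×n matrix `a`. -/
def circuit (a : Fin n → ℕ) (i j : Fin n) : Fin n → ℤ :=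
  fun k => if k = i then ((a j / Nat.gcd (a i) (a j) : ℕ) : ℤ)
           else if k = j then -((a i / Nat.gcd (a i) (a j) : ℕ) : ℤ) else 0

/-- `B` reduces the distance of all circuits of `a`. -/
def reducesCircuits (a : Fin n → ℕ) (B : Set (Fin n → ℤ)) : Prop :=
  ∀ i j : Fin n, i < j → reduces B (circuit a i j)

/-- `a` admits a gluing of the first kind. -/
def firstKind (a : Fin n → ℕ) : Prop :=
  ∀ k : Fin n, 1 ≤ k.val →
    ∃ lam : Fin n → ℕ, (∀ i, ¬ i < k → lam i = 0) ∧
      Nat.lcm ((Finset.univ.filter (fun i : Fin n => i < k)).gcd a) (a k) = ∑ i, lam i * a i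

/-- Kernel of the submatrix of `a` indexed by `S`, as vectors supported on `S`. -/
def kerOn (a : Fin n → ℕ) (S : Finset (Fin n)) : Set (Fin n → ℤ) :=
  {u | (∀ i, i ∉ S → u i = 0) ∧ ∑ i, (a i : ℤ) * u i = 0}

/-- `a` is glued along the pair of disjoint index sets `(S, T)`. -/
def gluedOn (a : Fin n → ℕ) (S T : Finset (Fin n)) : Prop :=
  ∃ z ∈ kerOn a (S ∪ T), (∀ i, 0 < z i → i ∈ S) ∧ (∀ i, z i < 0 → i ∈ T) ∧
    ∀ w ∈ kerOn a (S ∪ T), ∃! t : (Fin n → ℤ) × (Fin n → ℤ) × ℤ,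
      t.1 ∈ kerOn a S ∧ t.2.1 ∈ kerOn a T ∧ w = t.1 + t.2.1 + t.2.2 • z

/-- Complete intersection on the index set `S` (recursively defined via gluings). -/
inductive IsCIOn (a : Fin n → ℕ) : Finset (Fin n) → Prop
  | single (i : Fin n) : IsCIOn a {i}
  | glue {S T : Finset (Fin n)} (hS : S.Nonempty) (hT : T.Nonempty)
      (hd : Disjoint S T) (hg : gluedOn a S T) (cS : IsCIOn a S) (cT : IsCIOn a T) :
      IsCIOn a (S ∪ T)

/-- `a` is a complete intersection. -/
def isCI (a : Fin n → ℕ) : Prop := IsCIOn a Finset.univ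

/-- Positive distance decomposition. -/
def posDD (K : Set (Fin n → ℤ)) (z : Fin n → ℤ) : Prop :=
  ∃ u v, u ∈ K ∧ v ∈ K ∧ u ≠ 0 ∧ v ≠ 0 ∧ z = u + v ∧ vle (posP u) (posP z) ∧
    onorm v < onorm z

/-- Negative distance decomposition. -/
def negDD (K : Set (Fin n → ℤ)) (z : Fin n → ℤ) : Prop :=
  ∃ u v, u ∈ K ∧ v ∈ K ∧ u ≠ 0 ∧ v ≠ 0 ∧ z = u + v ∧ vle (negP u) (negP z) ∧
    onorm v < onorm z

def Dplus (K : Set (Fin n → ℤ)) : Set (Fin n → ℤ) := {z | z ∈ K ∧ z ≠ 0 ∧ ¬ posDD K z}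

def Dminus (K : Set (Fin n → ℤ)) : Set (Fin n → ℤ) := {z | z ∈ K ∧ z ≠ 0 ∧ ¬ negDD K z}

/-- The distance irreducible elements `D(A)`. -/
def Dboth (K : Set (Fin n → ℤ)) : Set (Fin n → ℤ) := Dplus K ∩ Dminus K

/-- The weakly distance irreducible elements `D^w(A)`. -/
def Dweak (K : Set (Fin n → ℤ)) : Set (Fin n → ℤ) := Dplus K ∪ Dminus K

/-- The indispensable set `S(A)`. -/
def indisp (K : Set (Fin n → ℤ)) : Set (Fin n → ℤ) :=
  {z | z ∈ K ∧ z ≠ 0 ∧ ¬ ∃ u v, u ∈ K ∧ v ∈ K ∧ u ≠ 0 ∧ v ≠ 0 ∧ z = u + v ∧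
      ∀ i, 0 < u i → 0 ≤ v i}

/-- Minimally distance reducing subset of `K`. -/
def minDistRed (K B : Set (Fin n → ℤ)) : Prop :=
  B ⊆ K ∧ distanceReducing K B ∧ ∀ B' ⊂ B, ¬ distanceReducing K B'

/-- Minimally strongly distance reducing subset of `K`. -/
def minStrongDistRed (K B : Set (Fin n → ℤ)) : Prop :=
  B ⊆ K ∧ stronglyDistanceReducing K B ∧ ∀ B' ⊂ B, ¬ stronglyDistanceReducing K B'


lemma onorm_nonneg (u : Fin n → ℤ) : 0 ≤ onorm u :=
  Finset.sum_nonneg fun _ _ => abs_nonneg _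

lemma abs_le_onorm (u : Fin n → ℤ) (i : Fin n) : |u i| ≤ onorm u :=
  Finset.single_le_sum (fun j _ => abs_nonneg (u j)) (Finset.mem_univ i)

lemma onorm_pos {u : Fin n → ℤ} (hu : u ≠ 0) : 0 < onorm u := by
  obtain ⟨i, hi⟩ := Function.ne_iff.mp hu
  have h1 : 0 < |u i| := abs_pos.mpr (by simpa using hi)
  linarith [abs_le_onorm u i]

lemma vle_trans {a b c : Fin n → ℤ} (h1 : vle a b) (h2 : vle b c) : vle a c :=
  fun i => le_trans (h1 i) (h2 i)

lemma conf_norm {g z : Fin n → ℤ} (h1 : vle (posP g) (posP z)) (h2 : vle (negP g) (negP z)) :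
    onorm z = onorm g + onorm (z - g) := by
  unfold onorm
  rw [← Finset.sum_add_distrib]
  refine Finset.sum_congr rfl fun i _ => ?_
  have ha := h1 i; have hb := h2 i
  simp only [posP, negP, Pi.sub_apply] at ha hb ⊢
  simp only [abs_eq_max_neg]
  omega

lemma onorm_triangle (a b : Fin n → ℤ) : onorm (a + b) ≤ onorm a + onorm b := by
  unfold onorm
  rw [← Finset.sum_add_distrib]
  exact Finset.sum_le_sum fun i _ => by simpa using abs_add_le (a i) (b i)

lemma onorm_neg (a : Fin n → ℤ) : onorm (-a) = onorm a := by
  unfold onorm; exact Finset.sum_congr rfl fun i _ => by simp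

lemma transfer_sub {u g z : Fin n → ℤ} (h1 : vle (posP g) (posP z)) (h2 : vle (negP g) (negP z))
    (hn : onorm (g - u) < onorm g) : onorm (z - u) < onorm z := by
  have he : z - u = (g - u) + (z - g) := by ext i; simp only [Pi.sub_apply, Pi.add_apply]; ring
  rw [he, conf_norm h1 h2]
  have := onorm_triangle (g - u) (z - g)
  linarith

lemma transfer_add {u g z : Fin n → ℤ} (h1 : vle (posP g) (posP z)) (h2 : vle (negP g) (negP z))
    (hn : onorm (g + u) < onorm g) : onorm (z + u) < onorm z := by
  have he : z + u = (g + u) + (z - g) := by ext i; simp only [Pi.sub_apply, Pi.add_apply]; ring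
  rw [he, conf_norm h1 h2]
  have := onorm_triangle (g + u) (z - g)
  linarith

lemma reducesOne_transfer {u g z : Fin n → ℤ} (h1 : vle (posP g) (posP z))
    (h2 : vle (negP g) (negP z)) (h : reducesOne u g) : reducesOne u z := by
  rcases h with ⟨hv, hn⟩ | ⟨hv, hn⟩ | ⟨hv, hn⟩ | ⟨hv, hn⟩
  · exact Or.inl ⟨vle_trans hv h1, transfer_sub h1 h2 hn⟩
  · exact Or.inr (Or.inl ⟨vle_trans hv h1, transfer_add h1 h2 hn⟩)
  · exact Or.inr (Or.inr (Or.inl ⟨vle_trans hv h2, transfer_add h1 h2 hn⟩))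
  · exact Or.inr (Or.inr (Or.inr ⟨vle_trans hv h2, transfer_sub h1 h2 hn⟩))

lemma bound_sub {u g : Fin n → ℤ} (hn : onorm (g - u) < onorm g) : onorm u < 2 * onorm g := by
  have he : u = g + -(g - u) := by ext i; simp only [Pi.add_apply, Pi.neg_apply, Pi.sub_apply]; ring
  calc onorm u = onorm (g + -(g - u)) := by rw [← he]
    _ ≤ onorm g + onorm (-(g - u)) := onorm_triangle _ _
    _ < 2 * onorm g := by rw [onorm_neg]; linarith

lemma bound_add {u g : Fin n → ℤ} (hn : onorm (g + u) < onorm g) : onorm u < 2 * onorm g := by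
  have he : u = -g + (g + u) := by ext i; simp only [Pi.add_apply, Pi.neg_apply]; ring
  calc onorm u = onorm (-g + (g + u)) := by rw [← he]
    _ ≤ onorm (-g) + onorm (g + u) := onorm_triangle _ _
    _ < 2 * onorm g := by rw [onorm_neg]; linarith

lemma reducesOne_bound {u g : Fin n → ℤ} (h : reducesOne u g) : onorm u < 2 * onorm g := by
  rcases h with ⟨_, hn⟩ | ⟨_, hn⟩ | ⟨_, hn⟩ | ⟨_, hn⟩
  exacts [bound_sub hn, bound_add hn, bound_add hn, bound_sub hn]

lemma exists_graver_summand_aux (K : Set (Fin n → ℤ)) :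
    ∀ N : ℕ, ∀ z ∈ K, z ≠ 0 → onorm z ≤ (N : ℤ) →
      ∃ g ∈ graver K, vle (posP g) (posP z) ∧ vle (negP g) (negP z) := by
  intro N
  induction N with
  | zero => exact fun z hz hz0 hN => absurd hN (by simpa using onorm_pos hz0)
  | succ N ih =>
    intro z hz hz0 hN
    by_cases hg : z ∈ graver K
    · exact ⟨z, hg, fun i => le_refl _, fun i => le_refl _⟩
    · have hdec : ∃ u v, u ∈ K ∧ v ∈ K ∧ u ≠ 0 ∧ v ≠ 0 ∧ z = u + v ∧
          posP z = posP u + posP v ∧ negP z = negP u + negP v := by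
        by_contra hc
        exact hg ⟨hz, hz0, hc⟩
      obtain ⟨u, v, huK, hvK, hu0, hv0, _, hp, hm⟩ := hdec
      have hpu : vle (posP u) (posP z) := fun i => by
        have h := congrFun hp i
        simp only [posP, negP, Pi.add_apply] at h ⊢
        omega
      have hmu : vle (negP u) (negP z) := fun i => by
        have h := congrFun hm i
        simp only [posP, negP, Pi.add_apply] at h ⊢
        omega
      have hnorm : onorm z = onorm u + onorm v := by
        unfold onorm
        rw [← Finset.sum_add_distrib]
        refine Finset.sum_congr rfl fun i _ => ?_
        have h1 := congrFun hp i; have h2 := congrFun hm i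
        simp only [posP, negP, Pi.add_apply] at h1 h2
        simp only [abs_eq_max_neg]
        omega
      have hle : onorm u ≤ (N : ℤ) := by
        have := onorm_pos hv0
        push_cast at hN ⊢
        linarith
      obtain ⟨g, hgG, hg1, hg2⟩ := ih u huK hu0 hle
      exact ⟨g, hgG, vle_trans hg1 hpu, vle_trans hg2 hmu⟩

lemma exists_graver_summand {K : Set (Fin n → ℤ)} {z : Fin n → ℤ} (hz : z ∈ K) (hz0 : z ≠ 0) :
    ∃ g ∈ graver K, vle (posP g) (posP z) ∧ vle (negP g) (negP z) :=
  exists_graver_summand_aux K (onorm z).toNat z hz hz0 (Int.self_le_toNat _)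

lemma graver_finite (K : Set (Fin n → ℤ)) (hK : ∀ x ∈ K, ∀ y ∈ K, x - y ∈ K) :
    (graver K).Finite := by
  classical
  set F : (Fin n → ℤ) → ((Fin n ⊕ Fin n) → ℕ) :=
    fun z => Sum.elim (fun i => (z i).toNat) (fun i => (-z i).toNat) with hF
  have hinjOn : Set.InjOn F (graver K) := by
    intro a _ b _ hab
    funext i
    have h1 := congrFun hab (Sum.inl i)
    have h2 := congrFun hab (Sum.inr i)
    simp only [hF, Sum.elim_inl, Sum.elim_inr] at h1 h2
    omega
  have hanti : IsAntichain (· ≤ ·) (F '' graver K) := by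
    rintro _ ⟨z, hz, rfl⟩ _ ⟨z', hz', rfl⟩ hne hle
    have hzz' : z ≠ z' := fun h => hne (by rw [h])
    apply hz'.2.2
    refine ⟨z, z' - z, hz.1, hK _ hz'.1 _ hz.1, hz.2.1, sub_ne_zero.mpr (Ne.symm hzz'), ?_, ?_, ?_⟩
    · funext i; simp only [Pi.add_apply, Pi.sub_apply]; ring
    · funext i
      have h1 : (z i).toNat ≤ (z' i).toNat := Pi.le_def.mp hle (Sum.inl i)
      have h2 : (-z i).toNat ≤ (-z' i).toNat := Pi.le_def.mp hle (Sum.inr i)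
      simp only [posP, Pi.add_apply, Pi.sub_apply]
      omega
    · funext i
      have h1 : (z i).toNat ≤ (z' i).toNat := Pi.le_def.mp hle (Sum.inl i)
      have h2 : (-z i).toNat ≤ (-z' i).toNat := Pi.le_def.mp hle (Sum.inr i)
      simp only [negP, Pi.add_apply, Pi.sub_apply]
      omega
  exact Set.Finite.of_finite_image
    (hanti.finite_of_partiallyWellOrderedOn
      (Set.isPWO_of_wellQuasiOrderedLE (F '' graver K))) hinjOn

lemma ball_finite (c : ℤ) : {u : Fin n → ℤ | onorm u ≤ c}.Finite := by
  apply Set.Finite.subset (Set.Finite.pi (fun _ : Fin n => Set.finite_Icc (-c) c))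
  intro u hu
  have hc : onorm u ≤ c := hu
  simp only [Set.mem_pi, Set.mem_univ, Set.mem_Icc, forall_true_left]
  intro i
  have h1 := abs_le_onorm u i
  constructor
  · linarith [neg_abs_le (u i)]
  · linarith [le_abs_self (u i)]

lemma shrink_red {n : ℕ} {K B : Set (Fin n → ℤ)} (hB : distanceReducing K B) {M : ℤ}
    (hM : ∀ g ∈ graver K, onorm g ≤ M) :
    distanceReducing K {u | u ∈ B ∧ onorm u < 2 * M} := by
  intro z hz hz0
  obtain ⟨g, hgG, h1, h2⟩ := exists_graver_summand (K := K) hz hz0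
  obtain ⟨u, huB, hru⟩ := hB g hgG.1 hgG.2.1
  have hMg : 2 * onorm g ≤ 2 * M := by have := hM g hgG; linarith
  exact ⟨u, ⟨huB, lt_of_lt_of_le (reducesOne_bound hru) hMg⟩,
    reducesOne_transfer h1 h2 hru⟩

lemma shrink_strong {n : ℕ} {K B : Set (Fin n → ℤ)} (hB : stronglyDistanceReducing K B) {M : ℤ}
    (hM : ∀ g ∈ graver K, onorm g ≤ M) :
    stronglyDistanceReducing K {u | u ∈ B ∧ onorm u < 2 * M} := by
  intro z hz hz0
  obtain ⟨g, hgG, h1, h2⟩ := exists_graver_summand (K := K) hz hz0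
  obtain ⟨⟨u, huB, hu⟩, ⟨u', hu'B, hu'⟩⟩ := hB g hgG.1 hgG.2.1
  have hMg : 2 * onorm g ≤ 2 * M := by have := hM g hgG; linarith
  constructor
  · rcases hu with ⟨hv, hn⟩ | ⟨hv, hn⟩
    · exact ⟨u, ⟨huB, lt_of_lt_of_le (bound_sub hn) hMg⟩,
        Or.inl ⟨vle_trans hv h1, transfer_sub h1 h2 hn⟩⟩
    · exact ⟨u, ⟨huB, lt_of_lt_of_le (bound_add hn) hMg⟩,
        Or.inr ⟨vle_trans hv h1, transfer_add h1 h2 hn⟩⟩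
  · rcases hu' with ⟨hv, hn⟩ | ⟨hv, hn⟩
    · exact ⟨u', ⟨hu'B, lt_of_lt_of_le (bound_add hn) hMg⟩,
        Or.inl ⟨vle_trans hv h2, transfer_add h1 h2 hn⟩⟩
    · exact ⟨u', ⟨hu'B, lt_of_lt_of_le (bound_sub hn) hMg⟩,
        Or.inr ⟨vle_trans hv h2, transfer_sub h1 h2 hn⟩⟩

/-- the universal (strongly) distance-reducing Markov bases are finite. -/
theorem universal_dist_red_bases_finite {d n : ℕ} (A : Matrix (Fin d) (Fin n) ℤ)
    (hker : ∀ u ∈ kerM A, (∀ i, 0 ≤ u i) → u = 0) :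
    Set.Finite {z | ∃ B, minDistRed (kerM A) B ∧ z ∈ B} ∧
    Set.Finite {z | ∃ B, minStrongDistRed (kerM A) B ∧ z ∈ B} := by
  have hKsub : ∀ x ∈ kerM A, ∀ y ∈ kerM A, x - y ∈ kerM A := by
    intro x hx y hy
    simp only [kerM, Set.mem_setOf_eq] at hx hy ⊢
    rw [Matrix.mulVec_sub, hx, hy, sub_zero]
  have hGfin := graver_finite (kerM A) hKsub
  obtain ⟨M, hM⟩ : ∃ M : ℤ, ∀ g ∈ graver (kerM A), onorm g ≤ M := by
    obtain ⟨M, hMub⟩ := (hGfin.image onorm).bddAbove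
    exact ⟨M, fun g hg => hMub (Set.mem_image_of_mem _ hg)⟩
  constructor
  · apply (ball_finite (2 * M)).subset
    rintro z ⟨B, ⟨hBK, hBred, hmin⟩, hzB⟩
    have hB' : distanceReducing (kerM A) {u | u ∈ B ∧ onorm u < 2 * M} :=
      shrink_red hBred hM
    have heq : {u | u ∈ B ∧ onorm u < 2 * M} = B := by
      by_contra hne
      exact hmin _ (Set.ssubset_iff_subset_ne.mpr ⟨fun u hu => hu.1, hne⟩) hB'
    have hz' : z ∈ {u | u ∈ B ∧ onorm u < 2 * M} := by rw [← heq] at hzB; exact hzB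
    exact le_of_lt hz'.2
  · apply (ball_finite (2 * M)).subset
    rintro z ⟨B, ⟨hBK, hBred, hmin⟩, hzB⟩
    have hB' : stronglyDistanceReducing (kerM A) {u | u ∈ B ∧ onorm u < 2 * M} :=
      shrink_strong hBred hM
    have heq : {u | u ∈ B ∧ onorm u < 2 * M} = B := by
      by_contra hne
      exact hmin _ (Set.ssubset_iff_subset_ne.mpr ⟨fun u hu => hu.1, hne⟩) hB'
    have hz' : z ∈ {u | u ∈ B ∧ onorm u < 2 * M} := by rw [← heq] at hzB; exact hzB
    exact le_of_lt hz'.2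


end DistRed
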